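/- arXiv:1306.0730 — 2 statements merged into one kernel-verified Lean document; each statement's English description precedes it below -/
import Mathlib

section
/- Let S ⊆ B(H)_sa be an invex set with respect to η : S × S → B(H)_sa satisfying condition C, and let f : ℝ → ℝ be continuous and operator preinvex with respect to η on S. Then for every A, B ∈ S, with V := A + η(B,A), the following inequalities hold in the operator order: 0 ≤ ∫₀¹ f(A + tη(B,A)) dt − f((A + V)/2) ≤ (f(A) + f(B))/2 − ∫₀¹ f(A + tη(B,A)) dt. -/
/-!
Along the segment `t ↦ A + t • N`, `N = η B A`, condition C gives
`η (A + s • N) (A + t • N) = (s - t) • N`, so preinvexity of `f` turns `φ t = f (A + t • N)` into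
an operator-convex function of `t ∈ [0, 1]`, and `φ 1 ≤ f B`. The claim is Bullen's refinement
`2 ∫ φ ≤ φ (1/2) + (φ 0 + φ 1) / 2` of the Hermite–Hadamard inequality for `φ`, obtained from the
right Hermite–Hadamard inequality on both halves of `[0, 1]`. Both Hermite–Hadamard inequalities
follow by pairing `t` with `a + b - t` under the integral, so they hold in any ordered Banach
space whose positive cone is closed, in particular for the Loewner order.
-/

open MeasureTheory Set

theorem add_sub_mem_Icc {a b x : ℝ} (hx : x ∈ Icc a b) : a + b - x ∈ Icc a b :=
  ⟨by linarith [hx.2], by linarith [hx.1]⟩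

section HermiteHadamard

variable {E : Type*} [NormedAddCommGroup E] {φ : ℝ → E} {a b : ℝ}

theorem IntervalIntegrable.comp_add_sub (hφ : IntervalIntegrable φ volume a b) :
    IntervalIntegrable (fun x => φ (a + b - x)) volume a b := by
  simpa using (hφ.comp_sub_left (a + b)).symm

variable [NormedSpace ℝ E]

theorem intervalIntegral.integral_add_comp_add_sub (hφ : IntervalIntegrable φ volume a b) :
    ∫ x in a..b, (φ x + φ (a + b - x)) = (2 : ℝ) • ∫ x in a..b, φ x := by
  have hreflect : ∫ x in a..b, φ (a + b - x) = ∫ x in a..b, φ x := by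
    simp [intervalIntegral.integral_comp_sub_left]
  rw [intervalIntegral.integral_add hφ hφ.comp_add_sub, hreflect, two_smul]

variable [PartialOrder E]

theorem ConvexOn.two_smul_map_midpoint_le [IsOrderedModule ℝ E]
    (hφ : ConvexOn ℝ (Icc a b) φ) {x : ℝ} (hx : x ∈ Icc a b) :
    (2 : ℝ) • φ ((a + b) / 2) ≤ φ x + φ (a + b - x) := by
  have h := hφ.2 hx (add_sub_mem_Icc hx) (by norm_num : (0 : ℝ) ≤ 2⁻¹)
    (by norm_num : (0 : ℝ) ≤ 2⁻¹) (by norm_num)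
  have hmid : (2⁻¹ : ℝ) • x + (2⁻¹ : ℝ) • (a + b - x) = (a + b) / 2 := by
    simp only [smul_eq_mul]; ring
  rw [hmid, ← smul_add] at h
  calc (2 : ℝ) • φ ((a + b) / 2) ≤ (2 : ℝ) • (2⁻¹ : ℝ) • (φ x + φ (a + b - x)) := by gcongr
    _ = φ x + φ (a + b - x) := by rw [smul_smul]; norm_num

theorem ConvexOn.map_add_map_add_sub_le [IsOrderedAddMonoid E]
    (hφ : ConvexOn ℝ (Icc a b) φ) (hab : a < b) {x : ℝ} (hx : x ∈ Icc a b) :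
    φ x + φ (a + b - x) ≤ φ a + φ b := by
  have hba : b - a ≠ 0 := (sub_pos.2 hab).ne'
  set p := (b - x) / (b - a)
  set q := (x - a) / (b - a)
  have hp : 0 ≤ p := div_nonneg (by linarith [hx.2]) (by linarith)
  have hq : 0 ≤ q := div_nonneg (by linarith [hx.1]) (by linarith)
  have hpq : p + q = 1 := by rw [← add_div, div_eq_one_iff_eq hba]; ring
  have hleft := hφ.2 (left_mem_Icc.2 hab.le) (right_mem_Icc.2 hab.le) hp hq hpq
  have hright := hφ.2 (left_mem_Icc.2 hab.le) (right_mem_Icc.2 hab.le) hq hp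
    (by rw [add_comm, hpq])
  have hx₁ : p • a + q • b = x := by simp only [smul_eq_mul, p, q]; field_simp; ring
  have hx₂ : q • a + p • b = a + b - x := by simp only [smul_eq_mul, p, q]; field_simp; ring
  rw [hx₁] at hleft
  rw [hx₂] at hright
  calc φ x + φ (a + b - x) ≤ (p • φ a + q • φ b) + (q • φ a + p • φ b) :=
        add_le_add hleft hright
    _ = (p + q) • (φ a + φ b) := by module
    _ = φ a + φ b := by rw [hpq, one_smul]

variable [IsOrderedAddMonoid E] [IsOrderedModule ℝ E] [ClosedIciTopology E]

theorem intervalIntegral.integral_mono_on' {ψ : ℝ → E} (hab : a ≤ b)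
    (hφ : IntervalIntegrable φ volume a b) (hψ : IntervalIntegrable ψ volume a b)
    (h : ∀ x ∈ Icc a b, φ x ≤ ψ x) : ∫ x in a..b, φ x ≤ ∫ x in a..b, ψ x := by
  rw [intervalIntegral.integral_of_le hab, intervalIntegral.integral_of_le hab]
  exact setIntegral_mono_on hφ.1 hψ.1 measurableSet_Ioc
    fun x hx => h x (Ioc_subset_Icc_self hx)

variable [CompleteSpace E]

theorem ConvexOn.smul_map_midpoint_le_integral (hφ : ConvexOn ℝ (Icc a b) φ)
    (hφc : ContinuousOn φ (Icc a b)) (hab : a < b) :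
    (b - a) • φ ((a + b) / 2) ≤ ∫ x in a..b, φ x := by
  have hint : IntervalIntegrable φ volume a b := hφc.intervalIntegrable_of_Icc hab.le
  have h2 : (2 : ℝ) • ((b - a) • φ ((a + b) / 2)) ≤ (2 : ℝ) • ∫ x in a..b, φ x := by
    rw [← intervalIntegral.integral_add_comp_add_sub hint, smul_comm,
      ← intervalIntegral.integral_const]
    exact intervalIntegral.integral_mono_on' hab.le intervalIntegrable_const
      (hint.add hint.comp_add_sub) fun x hx => hφ.two_smul_map_midpoint_le hx
  exact (smul_le_smul_iff_of_pos_left two_pos).1 h2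

theorem ConvexOn.integral_le_smul_add (hφ : ConvexOn ℝ (Icc a b) φ)
    (hφc : ContinuousOn φ (Icc a b)) (hab : a < b) :
    ∫ x in a..b, φ x ≤ ((b - a) / 2) • (φ a + φ b) := by
  have hint : IntervalIntegrable φ volume a b := hφc.intervalIntegrable_of_Icc hab.le
  have h2 : (2 : ℝ) • ∫ x in a..b, φ x ≤ (2 : ℝ) • (((b - a) / 2) • (φ a + φ b)) := by
    rw [← intervalIntegral.integral_add_comp_add_sub hint, smul_smul,
      mul_div_cancel₀ _ two_ne_zero, ← intervalIntegral.integral_const]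
    exact intervalIntegral.integral_mono_on' hab.le (hint.add hint.comp_add_sub)
      intervalIntegrable_const fun x hx => hφ.map_add_map_add_sub_le hab hx
  exact (smul_le_smul_iff_of_pos_left two_pos).1 h2

theorem ConvexOn.integral_sub_smul_map_midpoint_le (hφ : ConvexOn ℝ (Icc a b) φ)
    (hφc : ContinuousOn φ (Icc a b)) (hab : a < b) :
    (∫ x in a..b, φ x) - (b - a) • φ ((a + b) / 2) ≤
      ((b - a) / 2) • (φ a + φ b) - ∫ x in a..b, φ x := by
  set m := (a + b) / 2
  have ham : a < m := by simp only [m]; linarith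
  have hmb : m < b := by simp only [m]; linarith
  have hleft : Icc a m ⊆ Icc a b := Icc_subset_Icc_right hmb.le
  have hright : Icc m b ⊆ Icc a b := Icc_subset_Icc_left ham.le
  have h₁ := (hφ.subset hleft (convex_Icc a m)).integral_le_smul_add (hφc.mono hleft) ham
  have h₂ := (hφ.subset hright (convex_Icc m b)).integral_le_smul_add (hφc.mono hright) hmb
  rw [sub_le_sub_iff, ← intervalIntegral.integral_add_adjacent_intervals
    ((hφc.mono hleft).intervalIntegrable_of_Icc ham.le)
    ((hφc.mono hright).intervalIntegrable_of_Icc hmb.le)]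
  calc (∫ x in a..m, φ x) + (∫ x in m..b, φ x) + ((∫ x in a..m, φ x) + ∫ x in m..b, φ x)
      ≤ (((m - a) / 2) • (φ a + φ m) + ((b - m) / 2) • (φ m + φ b)) +
        (((m - a) / 2) • (φ a + φ m) + ((b - m) / 2) • (φ m + φ b)) := by gcongr
    _ = ((b - a) / 2) • (φ a + φ b) + (b - a) • φ m := by simp only [m]; module

end HermiteHadamard

section Preinvex

variable {M : Type*} [AddCommGroup M] [Module ℝ M]

def IsInvex (S : Set M) (η : M → M → M) : Prop :=
  ∀ A ∈ S, ∀ B ∈ S, ∀ t ∈ Icc (0 : ℝ) 1, A + t • η B A ∈ S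

def SatisfiesConditionC (S : Set M) (η : M → M → M) : Prop :=
  (∀ A ∈ S, ∀ B ∈ S, ∀ t ∈ Icc (0 : ℝ) 1, η A (A + t • η B A) = (-t) • η B A) ∧
    ∀ A ∈ S, ∀ B ∈ S, ∀ t ∈ Icc (0 : ℝ) 1, η B (A + t • η B A) = (1 - t) • η B A

def PreinvexOn {β : Type*} [AddCommMonoid β] [PartialOrder β] [SMul ℝ β]
    (S : Set M) (η : M → M → M) (F : M → β) : Prop :=
  ∀ A ∈ S, ∀ B ∈ S, ∀ t ∈ Icc (0 : ℝ) 1, F (A + t • η B A) ≤ (1 - t) • F A + t • F B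

variable {S : Set M} {η : M → M → M} {A B : M}

theorem SatisfiesConditionC.eta_add_smul_add_smul (hS : IsInvex S η)
    (hη : SatisfiesConditionC S η) (hA : A ∈ S) (hB : B ∈ S) {s t : ℝ} (hs : s ∈ Icc (0 : ℝ) 1)
    (ht : t ∈ Icc (0 : ℝ) 1) :
    η (A + s • η B A) (A + t • η B A) = (s - t) • η B A := by
  set N := η B A
  have hP : A + s • N ∈ S := hS A hA B hB s hs
  -- Condition C at `A + s • N`, towards `Q = B` (`c = 1 - s`) or `Q = A` (`c = -s`).
  have hreach : ∀ Q ∈ S, ∀ c : ℝ, η Q (A + s • N) = c • N → ∀ r ∈ Icc (0 : ℝ) 1, s + r * c = t →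
      η (A + s • N) (A + t • N) = (s - t) • N := by
    intro Q hQ c hc r hr hrc
    have h := hη.1 _ hP Q hQ r hr
    rw [hc, smul_smul, add_assoc, ← add_smul, hrc, smul_smul] at h
    rw [h]
    congr 1
    linarith
  rcases lt_or_ge s t with hst | hts
  · have hs1 : 0 < 1 - s := by linarith [ht.2]
    refine hreach B hB (1 - s) (hη.2 A hA B hB s hs) ((t - s) / (1 - s)) ⟨?_, ?_⟩ ?_
    · exact div_nonneg (by linarith) hs1.le
    · exact (div_le_one hs1).2 (by linarith [ht.2])
    · field_simp; ring
  · have hc := hη.1 A hA B hB s hs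
    rcases hs.1.eq_or_lt with rfl | hs0
    · exact hreach A hA _ hc 0 (left_mem_Icc.2 zero_le_one) (by linarith [ht.1])
    refine hreach A hA (-s) hc ((s - t) / s) ⟨?_, ?_⟩ ?_
    · exact div_nonneg (by linarith) hs0.le
    · exact (div_le_one hs0).2 (by linarith [ht.1])
    · field_simp; ring

theorem PreinvexOn.convexOn_comp_add_smul {β : Type*} [AddCommMonoid β] [PartialOrder β]
    [SMul ℝ β] {F : M → β} (hF : PreinvexOn S η F) (hS : IsInvex S η)
    (hη : SatisfiesConditionC S η) (hA : A ∈ S) (hB : B ∈ S) :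
    ConvexOn ℝ (Icc 0 1) fun t : ℝ => F (A + t • η B A) := by
  refine ⟨convex_Icc 0 1, fun x hx y hy p q hp hq hpq => ?_⟩
  have h := hF _ (hS A hA B hB y hy) _ (hS A hA B hB x hx) p ⟨hp, by linarith⟩
  have hq' : 1 - p = q := by linarith
  have harg : A + y • η B A + p • ((x - y) • η B A) = A + (p • x + q • y) • η B A := by
    rw [← hq']; module
  rwa [hη.eta_add_smul_add_smul hS hA hB hx hy, harg, hq', add_comm (q • _)] at h

end Preinvex

/-- The integral mean of an operator preinvex function is closer to the
left Hermite–Hadamard bound than to the right one: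
`0 ≤ ∫₀¹ f(A + tη(B,A)) dt − f((A+V)/2) ≤ (f(A)+f(B))/2 − ∫₀¹ f(A + tη(B,A)) dt`
in the operator order, where `V = A + η(B,A)`. -/
theorem integral_closer_to_left_bound_operator_preinvex
    {H : Type*} [NormedAddCommGroup H] [InnerProductSpace ℂ H] [CompleteSpace H]
    (S : Set (H →L[ℂ] H)) (hSsa : ∀ A ∈ S, IsSelfAdjoint A)
    (η : (H →L[ℂ] H) → (H →L[ℂ] H) → (H →L[ℂ] H))
    (hinvex : ∀ A ∈ S, ∀ B ∈ S, ∀ t ∈ Set.Icc (0:ℝ) 1, A + t • η B A ∈ S)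
    (hC1 : ∀ A ∈ S, ∀ B ∈ S, ∀ t ∈ Set.Icc (0:ℝ) 1,
      η A (A + t • η B A) = (-t) • η B A)
    (hC2 : ∀ A ∈ S, ∀ B ∈ S, ∀ t ∈ Set.Icc (0:ℝ) 1,
      η B (A + t • η B A) = (1 - t) • η B A)
    (f : ℝ → ℝ) (hf : Continuous f)
    (hpreinvex : ∀ A ∈ S, ∀ B ∈ S, ∀ t ∈ Set.Icc (0:ℝ) 1,
      cfc f (A + t • η B A) ≤ (1 - t) • cfc f A + t • cfc f B) :
    ∀ A ∈ S, ∀ B ∈ S, ∀ V : H →L[ℂ] H, V = A + η B A →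
      0 ≤ (∫ t in (0:ℝ)..1, cfc f (A + t • η B A)) - cfc f ((2:ℝ)⁻¹ • (A + V)) ∧
      (∫ t in (0:ℝ)..1, cfc f (A + t • η B A)) - cfc f ((2:ℝ)⁻¹ • (A + V)) ≤
        (2:ℝ)⁻¹ • (cfc f A + cfc f B) - ∫ t in (0:ℝ)..1, cfc f (A + t • η B A) := by
  intro A hA B hB V rfl
  have hconv : ConvexOn ℝ (Icc 0 1) fun t : ℝ => cfc f (A + t • η B A) :=
    PreinvexOn.convexOn_comp_add_smul hpreinvex hinvex ⟨hC1, hC2⟩ hA hB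
  have hsa : ∀ t : ℝ, IsSelfAdjoint (A + t • η B A) := by
    have hV : IsSelfAdjoint (A + η B A) := by
      simpa using hSsa _ (hinvex A hA B hB 1 (right_mem_Icc.2 zero_le_one))
    have hN : IsSelfAdjoint (η B A) := by simpa using hV.sub (hSsa A hA)
    exact fun t => (hSsa A hA).add ((IsSelfAdjoint.all t).smul hN)
  have hcont : Continuous fun t : ℝ => cfc f (A + t • η B A) :=
    Continuous.cfc_of_mem_nhdsSet f Filter.univ_mem (by fun_prop) hsa hf.continuousOn
  have hend : cfc f (A + η B A) ≤ cfc f B := by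
    simpa using hpreinvex A hA B hB 1 (right_mem_Icc.2 zero_le_one)
  have hmid : (2 : ℝ)⁻¹ • (A + (A + η B A)) = A + ((0 + 1) / 2 : ℝ) • η B A := by module
  have hleft := hconv.smul_map_midpoint_le_integral hcont.continuousOn zero_lt_one
  have hbullen := hconv.integral_sub_smul_map_midpoint_le hcont.continuousOn zero_lt_one
  simp only [sub_zero, one_smul, zero_smul, add_zero] at hleft hbullen
  rw [hmid]
  refine ⟨sub_nonneg.2 hleft, hbullen.trans ?_⟩
  rw [one_div]
  gcongr
end

section
/- Let f : I → ℝ⁺ be a continuous nonnegative operator convex function on an interval I ⊆ ℝ. Then for any bounded selfadjoint operators A and B on a complex Hilbert space H with spectra contained in I and any a, b ∈ (0,1) with a < b, the following operator norm inequalities hold: ‖(1/2)∫₀ᵃ f((1−s)A + sB) ds + (1/2)∫₀ᵇ f((1−s)A + sB) ds − (1/(b−a))∫ₐᵇ (∫₀ᵗ f((1−s)A + sB) ds) dt‖ ≤ ((b−a)/8)·‖f((1−a)A + aB) + f((1−b)A + bB)‖ ≤ ((b−a)/8)·[‖f((1−a)A + aB)‖ + ‖f((1−b)A + bB)‖]. 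-/
/-!
Write `g s = f((1 - s)A + sB)` and `m = (a + b)/2`. Integrating `(t - m) • ∫₀ᵗ g` by parts turns
the left hand side into `(b - a)⁻¹ ∫ₐᵇ (t - m) g(t) dt`; reflecting `[a, m]` onto `[m, b]` makes
it `(b - a)⁻¹ ∫ₘᵇ (t - m) (g(t) - g(a + b - t)) dt`. Operator convexity makes `g` convex, so
`0 ≤ g ≤ g(a) + g(b)` on `[a, b]`, whence `±(g(t) - g(a + b - t)) ≤ g(a) + g(b)`. In a C⋆-algebra
this bounds `‖g(t) - g(a + b - t)‖` by `‖g(a) + g(b)‖`, and `∫ₘᵇ (t - m) dt = (b - a)² / 8`.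
-/

open Set MeasureTheory intervalIntegral

section Trapezoid

variable {E : Type*} [NormedAddCommGroup E] [NormedSpace ℝ E]

theorem trapezoid_sub_average_primitive_eq [CompleteSpace E] {g : ℝ → E} {a b x₀ : ℝ}
    (hx₀ : x₀ ≤ a) (hab : a < b) (hg : ContinuousOn g (Icc x₀ b)) :
    (2:ℝ)⁻¹ • (∫ s in x₀..a, g s) + (2:ℝ)⁻¹ • (∫ s in x₀..b, g s) -
      (b - a)⁻¹ • ∫ t in a..b, ∫ s in x₀..t, g s =
      (b - a)⁻¹ • ∫ t in a..b, (t - (a + b) / 2) • g t := by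
  set G : ℝ → E := fun t => ∫ s in x₀..t, g s
  have hx₀b : x₀ ≤ b := hx₀.trans hab.le
  have hsub : uIcc a b ⊆ Icc x₀ b := by
    rw [uIcc_of_le hab.le]; exact Icc_subset_Icc_left hx₀
  have hG : ContinuousOn G (uIcc a b) :=
    (continuousOn_primitive_interval (by rw [uIcc_of_le hx₀b]; exact hg.integrableOn_Icc)).mono
      (by rwa [uIcc_of_le hx₀b])
  have hG' : ∀ t ∈ Ioo (min a b) (max a b), HasDerivWithinAt G (g t) (Ioi t) t := by
    intro t ht
    rw [min_eq_left hab.le, max_eq_right hab.le] at ht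
    have ht' : t ∈ Ioo x₀ b := ⟨hx₀.trans_lt ht.1, ht.2⟩
    refine (integral_hasDerivAt_right ?_ ?_ ?_).hasDerivWithinAt
    · exact (hg.mono (uIcc_subset_Icc ⟨le_rfl, hx₀b⟩ (Ioo_subset_Icc_self ht')))
        |>.intervalIntegrable
    · exact (hg.mono Ioo_subset_Icc_self).stronglyMeasurableAtFilter isOpen_Ioo t ht'
    · exact hg.continuousAt (Icc_mem_nhds ht'.1 ht'.2)
  have hgi : IntervalIntegrable g volume a b := (hg.mono hsub).intervalIntegrable
  have parts := integral_deriv_smul_eq_sub_of_hasDeriv_right (u := fun t => t - (a + b) / 2)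
    (u' := fun _ => (1:ℝ)) (by fun_prop) hG
    (fun t _ => ((hasDerivAt_id t).sub_const _).hasDerivWithinAt) hG' intervalIntegrable_const hgi
  rw [integral_add (by simpa using hG.intervalIntegrable) (hgi.continuousOn_smul (by fun_prop))]
    at parts
  simp only [one_smul] at parts
  rw [eq_sub_of_add_eq parts]
  have hba : b - a ≠ 0 := sub_ne_zero.2 hab.ne'
  match_scalars <;> field_simp <;> ring

theorem integral_smul_sub_midpoint_eq {g : ℝ → E} {a b : ℝ}
    (hg : IntervalIntegrable g volume a b) :
    ∫ t in a..b, (t - (a + b) / 2) • g t =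
      ∫ t in (a + b) / 2..b, (t - (a + b) / 2) • (g t - g (a + b - t)) := by
  set m := (a + b) / 2 with hm
  have hmid : m ∈ uIcc a b := by
    rcases le_total a b with h | h
    · rw [uIcc_of_le h]; constructor <;> linarith
    · rw [uIcc_of_ge h]; constructor <;> linarith
  have hint : ∀ {u v}, uIcc u v ⊆ uIcc a b →
      IntervalIntegrable (fun t => (t - m) • g t) volume u v :=
    fun h => (hg.mono_set h).continuousOn_smul (by fun_prop)
  have hleft : ∫ t in a..m, (t - m) • g t = -∫ t in m..b, (t - m) • g (a + b - t) := by
    have h := integral_comp_sub_left (a := m) (b := b) (fun t => (t - m) • g t) (a + b)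
    rw [show a + b - b = a by ring, show a + b - m = m by ring] at h
    rw [← h, ← intervalIntegral.integral_neg]
    congr 1 with t
    rw [← neg_smul]; congr 1; ring
  have hrefl : IntervalIntegrable (fun t => (t - m) • g (a + b - t)) volume m b := by
    have h := (hg.mono_set (uIcc_subset_uIcc_left hmid)).comp_sub_left (a + b)
    rw [show a + b - a = b by ring, show a + b - m = m by ring] at h
    exact h.symm.continuousOn_smul (by fun_prop)
  rw [← integral_add_adjacent_intervals (hint (uIcc_subset_uIcc_left hmid))
    (hint (uIcc_subset_uIcc_right hmid)), hleft, neg_add_eq_sub,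
    ← integral_sub (hint (uIcc_subset_uIcc_right hmid)) hrefl]
  simp only [smul_sub]

end Trapezoid

theorem ConvexOn.le_add_of_mem_segment {E M : Type*} [AddCommGroup E] [Module ℝ E]
    [AddCommGroup M] [PartialOrder M] [IsOrderedAddMonoid M] [Module ℝ M] [SMulPosMono ℝ M]
    {s : Set E} {φ : E → M} (hφ : ConvexOn ℝ s φ) {x y z : E} (hx : x ∈ s) (hy : y ∈ s)
    (hx0 : 0 ≤ φ x) (hy0 : 0 ≤ φ y) (hz : z ∈ segment ℝ x y) : φ z ≤ φ x + φ y := by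
  obtain ⟨p, q, hp, hq, hpq, rfl⟩ := hz
  exact (hφ.2 hx hy hp hq hpq).trans (add_le_add
    (smul_le_of_le_one_left hx0 (by linarith)) (smul_le_of_le_one_left hy0 (by linarith)))

theorem Set.OrdConnected.exists_Icc_subset_of_isCompact {I K : Set ℝ} (hI : I.OrdConnected)
    (hK : IsCompact K) (hKI : K ⊆ I) : ∃ α β, K ⊆ Icc α β ∧ Icc α β ⊆ I := by
  rcases K.eq_empty_or_nonempty with rfl | hne
  · exact ⟨1, 0, empty_subset _, by simp⟩
  · exact ⟨sInf K, sSup K, subset_Icc_csInf_csSup hK.bddBelow hK.bddAbove,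
      hI.out (hKI (hK.sInf_mem hne)) (hKI (hK.sSup_mem hne))⟩

section CStarAlgebra

variable {A : Type*} [CStarAlgebra A] [PartialOrder A]

theorem convexOn_cfc_sub_smul_add_smul {f : ℝ → ℝ} {I : Set ℝ}
    (hconvex : ∀ x y : A, IsSelfAdjoint x → IsSelfAdjoint y →
      spectrum ℝ x ⊆ I → spectrum ℝ y ⊆ I → ∀ lam ∈ Icc (0:ℝ) 1,
        cfc f ((1 - lam) • x + lam • y) ≤ (1 - lam) • cfc f x + lam • cfc f y)
    {x y : A} (hx : IsSelfAdjoint x) (hy : IsSelfAdjoint y)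
    (hspec : ∀ s ∈ Icc (0:ℝ) 1, spectrum ℝ ((1 - s) • x + s • y) ⊆ I) :
    ConvexOn ℝ (Icc (0:ℝ) 1) fun s => cfc f ((1 - s) • x + s • y) := by
  refine ⟨convex_Icc _ _, fun s hs t ht p q hp hq hpq => ?_⟩
  have h := hconvex _ _ (by cfc_tac) (by cfc_tac) (hspec s hs) (hspec t ht) q
    ⟨hq, by linarith⟩
  obtain rfl : p = 1 - q := by linarith
  convert h using 2
  simp only [smul_eq_mul]
  module

variable [StarOrderedRing A]

theorem IsSelfAdjoint.norm_le_norm_of_neg_le_of_le {x c : A} (hx : IsSelfAdjoint x)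
    (hxc : -c ≤ x) (hcx : x ≤ c) : ‖x‖ ≤ ‖c‖ := by
  nontriviality A
  have hc : IsSelfAdjoint c := by
    simpa using (IsSelfAdjoint.of_nonneg (sub_nonneg.2 hcx)).add hx
  have hup : ∀ t ∈ spectrum ℝ x, t ≤ ‖c‖ :=
    (le_algebraMap_iff_spectrum_le hx).1 (hcx.trans hc.le_algebraMap_norm_self)
  have hlo : ∀ t ∈ spectrum ℝ x, -‖c‖ ≤ t :=
    (algebraMap_le_iff_le_spectrum hx).1 <| by
      simpa using hc.neg.neg_algebraMap_norm_le_self.trans hxc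
  rcases CStarAlgebra.norm_or_neg_norm_mem_spectrum hx with h | h
  · exact hup _ h
  · linarith [hlo _ h]

theorem norm_integral_smul_sub_midpoint_le {g : ℝ → A} {c : A} {a b : ℝ} (hab : a ≤ b)
    (hg : IntervalIntegrable g volume a b) (hg0 : ∀ t ∈ Icc a b, 0 ≤ g t)
    (hgc : ∀ t ∈ Icc a b, g t ≤ c) :
    ‖∫ t in a..b, (t - (a + b) / 2) • g t‖ ≤ (b - a) ^ 2 / 8 * ‖c‖ := by
  rw [integral_smul_sub_midpoint_eq hg]
  set m := (a + b) / 2 with hm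
  have hdiff : ∀ t ∈ Icc m b, ‖g t - g (a + b - t)‖ ≤ ‖c‖ := by
    intro t ht
    have ht₁ : t ∈ Icc a b := ⟨by linarith [ht.1], ht.2⟩
    have ht₂ : a + b - t ∈ Icc a b := ⟨by linarith [ht.2], by linarith [ht.1]⟩
    refine ((IsSelfAdjoint.of_nonneg (hg0 t ht₁)).sub (.of_nonneg (hg0 _ ht₂)))
      |>.norm_le_norm_of_neg_le_of_le ?_ ?_
    · calc -c ≤ -g (a + b - t) := neg_le_neg (hgc _ ht₂)
        _ ≤ g t - g (a + b - t) := by simpa using hg0 t ht₁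
    · calc g t - g (a + b - t) ≤ g t := sub_le_self _ (hg0 _ ht₂)
        _ ≤ c := hgc t ht₁
  calc ‖∫ t in m..b, (t - m) • (g t - g (a + b - t))‖
      ≤ ∫ t in m..b, (t - m) * ‖c‖ := by
        refine norm_integral_le_of_norm_le (by linarith) (ae_of_all _ fun t ht => ?_)
          (Continuous.intervalIntegrable (by fun_prop) _ _)
        rw [norm_smul, Real.norm_of_nonneg (by linarith [ht.1])]
        exact mul_le_mul_of_nonneg_left (hdiff t (Ioc_subset_Icc_self ht)) (by linarith [ht.1])
    _ = (b - a) ^ 2 / 8 * ‖c‖ := by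
        rw [intervalIntegral.integral_mul_const, integral_comp_sub_right (fun t => t), integral_id]
        ring

theorem norm_trapezoid_sub_average_primitive_le {g : ℝ → A} {c : A} {a b x₀ : ℝ}
    (hx₀ : x₀ ≤ a) (hab : a < b) (hg : ContinuousOn g (Icc x₀ b))
    (hg0 : ∀ t ∈ Icc a b, 0 ≤ g t) (hgc : ∀ t ∈ Icc a b, g t ≤ c) :
    ‖(2:ℝ)⁻¹ • (∫ s in x₀..a, g s) + (2:ℝ)⁻¹ • (∫ s in x₀..b, g s) -
      (b - a)⁻¹ • ∫ t in a..b, ∫ s in x₀..t, g s‖ ≤ (b - a) / 8 * ‖c‖ := by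
  have hba : 0 < b - a := sub_pos.2 hab
  have hgi : IntervalIntegrable g volume a b :=
    (hg.mono (by rw [uIcc_of_le hab.le]; exact Icc_subset_Icc_left hx₀)).intervalIntegrable
  rw [trapezoid_sub_average_primitive_eq hx₀ hab hg, norm_smul,
    Real.norm_of_nonneg (by positivity)]
  calc (b - a)⁻¹ * ‖∫ t in a..b, (t - (a + b) / 2) • g t‖
      ≤ (b - a)⁻¹ * ((b - a) ^ 2 / 8 * ‖c‖) := by
        gcongr; exact norm_integral_smul_sub_midpoint_le hab.le hgi hg0 hgc
    _ = (b - a) / 8 * ‖c‖ := by field_simp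

theorem spectrum_subset_Icc_iff {x : A} (hx : IsSelfAdjoint x) {α β : ℝ} :
    spectrum ℝ x ⊆ Icc α β ↔ x ∈ Icc (algebraMap ℝ A α) (algebraMap ℝ A β) := by
  rw [mem_Icc, algebraMap_le_iff_le_spectrum hx, le_algebraMap_iff_spectrum_le hx]
  exact ⟨fun h => ⟨fun t ht => (h ht).1, fun t ht => (h ht).2⟩,
    fun h t ht => ⟨h.1 t ht, h.2 t ht⟩⟩

theorem spectrum_sub_smul_add_smul_subset_Icc {x y : A} (hx : IsSelfAdjoint x)
    (hy : IsSelfAdjoint y) {α β : ℝ} (hxαβ : spectrum ℝ x ⊆ Icc α β)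
    (hyαβ : spectrum ℝ y ⊆ Icc α β) {s : ℝ} (hs : s ∈ Icc (0:ℝ) 1) :
    spectrum ℝ ((1 - s) • x + s • y) ⊆ Icc α β := by
  rw [spectrum_subset_Icc_iff (by cfc_tac)]
  exact convex_Icc _ _ ((spectrum_subset_Icc_iff hx).1 hxαβ)
    ((spectrum_subset_Icc_iff hy).1 hyαβ) (sub_nonneg.2 hs.2) hs.1 (sub_add_cancel 1 s)

end CStarAlgebra

/-- Operator norm estimates of Hermite–Hadamard type for a nonnegative
operator convex function `f` on an interval `I`. -/
theorem dragomir_agarwal_operator_convex_norm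
    {H : Type*} [NormedAddCommGroup H] [InnerProductSpace ℂ H] [CompleteSpace H]
    (I : Set ℝ) (hI : I.OrdConnected)
    (f : ℝ → ℝ) (hf : ContinuousOn f I) (hfnonneg : ∀ t ∈ I, 0 ≤ f t)
    (hconvex : ∀ A B : H →L[ℂ] H, IsSelfAdjoint A → IsSelfAdjoint B →
      spectrum ℝ A ⊆ I → spectrum ℝ B ⊆ I → ∀ lam ∈ Set.Icc (0:ℝ) 1,
        cfc f ((1 - lam) • A + lam • B) ≤ (1 - lam) • cfc f A + lam • cfc f B) :
    ∀ A B : H →L[ℂ] H, IsSelfAdjoint A → IsSelfAdjoint B →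
      spectrum ℝ A ⊆ I → spectrum ℝ B ⊆ I →
      ∀ a ∈ Set.Ioo (0:ℝ) 1, ∀ b ∈ Set.Ioo (0:ℝ) 1, a < b →
      ‖(2:ℝ)⁻¹ • (∫ s in (0:ℝ)..a, cfc f ((1 - s) • A + s • B)) +
        (2:ℝ)⁻¹ • (∫ s in (0:ℝ)..b, cfc f ((1 - s) • A + s • B)) -
        (b - a)⁻¹ • ∫ t in a..b, (∫ s in (0:ℝ)..t, cfc f ((1 - s) • A + s • B))‖ ≤
      (b - a) / 8 * ‖cfc f ((1 - a) • A + a • B) + cfc f ((1 - b) • A + b • B)‖ ∧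
      (b - a) / 8 * ‖cfc f ((1 - a) • A + a • B) + cfc f ((1 - b) • A + b • B)‖ ≤
      (b - a) / 8 * (‖cfc f ((1 - a) • A + a • B)‖ + ‖cfc f ((1 - b) • A + b • B)‖) := by
  intro A B hA hB hAI hBI a ha b hb hab
  refine ⟨?_, mul_le_mul_of_nonneg_left (norm_add_le _ _) (by linarith)⟩
  obtain ⟨α, β, hABαβ, hαβI⟩ := hI.exists_Icc_subset_of_isCompact
    ((spectrum.isCompact A).union (spectrum.isCompact B)) (union_subset hAI hBI)
  have hspec : ∀ s ∈ Icc (0:ℝ) 1, spectrum ℝ ((1 - s) • A + s • B) ⊆ Icc α β := fun s hs =>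
    spectrum_sub_smul_add_smul_subset_Icc hA hB (subset_union_left.trans hABαβ)
      (subset_union_right.trans hABαβ) hs
  have hspecI := fun s hs => (hspec s hs).trans hαβI
  have hcont : ContinuousOn (fun s => cfc f ((1 - s) • A + s • B)) (Icc (0:ℝ) 1) :=
    ContinuousOn.cfc' isCompact_Icc f (by fun_prop) hspec (fun _ _ => by cfc_tac) (hf.mono hαβI)
  have hnonneg : ∀ s ∈ Icc (0:ℝ) 1, 0 ≤ cfc f ((1 - s) • A + s • B) := fun s hs =>
    cfc_nonneg fun t ht => hfnonneg t (hspecI s hs ht)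
  have hab01 : Icc a b ⊆ Icc (0:ℝ) 1 := Icc_subset_Icc ha.1.le hb.2.le
  have ha01 : a ∈ Icc (0:ℝ) 1 := hab01 (left_mem_Icc.2 hab.le)
  have hb01 : b ∈ Icc (0:ℝ) 1 := hab01 (right_mem_Icc.2 hab.le)
  exact norm_trapezoid_sub_average_primitive_le ha.1.le hab
    (hcont.mono (Icc_subset_Icc le_rfl hb.2.le)) (fun t ht => hnonneg t (hab01 ht))
    fun t ht => (convexOn_cfc_sub_smul_add_smul hconvex hA hB hspecI).le_add_of_mem_segment
      ha01 hb01 (hnonneg a ha01) (hnonneg b hb01) (by rwa [segment_eq_Icc hab.le])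
end
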